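/- Let n ≥ 3 and consider the building-block graph B_n with nodes a_1,…,a_n and b_1,…,b_{n-1}, where for each i ∈ {1,…,n−1} there is an edge (a_i, a_{i+1}) with delay 1 and edges (a_i, b_i), (b_i, a_{i+1}) with delay 0, and all edges have capacity 1. For each j ∈ {1,…,n−1}, let p_j be the a_1–a_n path that uses the delay-1 edge (a_j, a_{j+1}) and the zero-delay routes through b_i for all i ≠ j. Then assigning rate 1/(n−2) to each of the n−1 paths p_1,…,p_{n-1} yields a feasible flow of rate R = (n−1)/(n−2) in which every flow-carrying path has delay exactly 1. -/

import Mathlib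

/-- A directed network: each edge has a source node, a destination node,
a non-negative integer capacity and a non-negative integer delay. -/
structure Network (V : Type) (E : Type) where
  src : E → V
  dst : E → V
  cap : E → ℕ
  delay : E → ℕ

namespace Network

variable {V E : Type}

/-- `N.IsPath s t p` : the list of edges `p` forms a directed path from `s` to `t`. -/
def IsPath (N : Network V E) : V → V → List E → Prop
  | s, t, [] => s = t
  | s, t, e :: es => N.src e = s ∧ N.IsPath (N.dst e) t es

/-- The delay of a path: the sum of the delays of its edges. -/
def pathDelay (N : Network V E) (p : List E) : ℕ := (p.map N.delay).sum

end Network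

/-- A (path-based) flow from `s` to `t`: a finitely-supported assignment of
non-negative rates to `s`–`t` paths. -/
structure PathFlow {V E : Type} (N : Network V E) (s t : V) where
  f : List E →₀ ℝ
  nonneg : ∀ p, 0 ≤ f p
  isPath : ∀ p ∈ f.support, N.IsPath s t p

namespace PathFlow

variable {V E : Type} [DecidableEq E] {N : Network V E} {s t : V}

/-- Total rate of the flow. -/
noncomputable def totalRate (F : PathFlow N s t) : ℝ := ∑ p ∈ F.f.support, F.f p

/-- Rate carried by edge `e`: the sum of the rates of all paths containing `e`. -/
noncomputable def edgeRate (F : PathFlow N s t) (e : E) : ℝ :=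
  ∑ p ∈ F.f.support, if e ∈ p then F.f p else 0

/-- Feasibility with rate `R`: total rate is `R` and every edge capacity is respected. -/
def Feasible (F : PathFlow N s t) (R : ℝ) : Prop :=
  F.totalRate = R ∧ ∀ e, F.edgeRate e ≤ (N.cap e : ℝ)

/-- The maximum delay over flow-carrying paths. -/
def maxDelay (F : PathFlow N s t) : ℕ := F.f.support.sup N.pathDelay

/-- An integer flow assigns a non-negative integer rate to every path. -/
def IsInteger (F : PathFlow N s t) : Prop := ∀ p, ∃ m : ℕ, F.f p = (m : ℝ)

end PathFlow
/-- Nodes of the partition-reduction graph `G'`: `Sum.inl i` is `w_i` (`i = 0,…,n`),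
`Sum.inr i` is `v_{i+1}` (`i = 0,…,n-1`). -/
abbrev GV (n : ℕ) := Fin (n + 1) ⊕ Fin n

/-- Edges of `G'`: `Sum.inl i` is the direct edge `(w_i, w_{i+1})` of delay `a i`;
`Sum.inr (Sum.inl i)` is `(w_i, v_{i+1})` and `Sum.inr (Sum.inr i)` is `(v_{i+1}, w_{i+1})`,
both of delay `0`. All edges have capacity `1`. -/
abbrev GE (n : ℕ) := Fin n ⊕ (Fin n ⊕ Fin n)

/-- The graph `G'` reduced from the partition problem. -/
def Gpart (n : ℕ) (a : Fin n → ℕ) : Network (GV n) (GE n) where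
  src
    | Sum.inl i => Sum.inl i.castSucc
    | Sum.inr (Sum.inl i) => Sum.inl i.castSucc
    | Sum.inr (Sum.inr i) => Sum.inr i
  dst
    | Sum.inl i => Sum.inl i.succ
    | Sum.inr (Sum.inl i) => Sum.inr i
    | Sum.inr (Sum.inr i) => Sum.inl i.succ
  cap := fun _ => 1
  delay
    | Sum.inl i => a i
    | Sum.inr _ => 0

/-- The building-block graph `B_n` of Fig. 3: spine nodes `a_1,…,a_n`
(`Sum.inl i` = `a_{i+1}`) and detour nodes `b_1,…,b_{n-1}` (`Sum.inr i` = `b_{i+1}`);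
for each of the `n - 1` layers there is a direct edge `(a_i, a_{i+1})` of delay `1` and
a zero-delay two-edge route `(a_i, b_i), (b_i, a_{i+1})`; all edges have capacity `1`. -/
abbrev Bblock (n : ℕ) : Network (GV (n - 1)) (GE (n - 1)) :=
  Gpart (n - 1) (fun _ => 1)

/-- The source `a_1` of `B_n`. -/
abbrev BblockSrc (n : ℕ) : GV (n - 1) := Sum.inl 0

/-- The sink `a_n` of `B_n`. -/
abbrev BblockSink (n : ℕ) : GV (n - 1) := Sum.inl (Fin.last (n - 1))

/-- The `a_1`–`a_n` path of `B_n` that uses the delay-1 direct edge of layer `j` and the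
zero-delay detour route through `b_i` at every other layer `i ≠ j`. -/
def blockPath (m : ℕ) (j : Fin m) : List (GE m) :=
  (List.finRange m).flatMap fun i =>
    if i = j then [Sum.inl i] else [Sum.inr (Sum.inl i), Sum.inr (Sum.inr i)]

/-! Every edge of `B_n` avoids at least one of the `n - 1` paths `p_j`: the delay-1 edge of
layer `i` lies only on `p_i`, the two detour edges of layer `i` on every path but `p_i`. So rate
`1/(n-2)` on each path loads every edge with at most `(n-2)/(n-2) = 1`, and each `p_j` collects
delay from its single direct edge only. -/

namespace Network

variable {V E : Type} (N : Network V E)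

theorem IsPath.append {s u t : V} {p q : List E} (hp : N.IsPath s u p) (hq : N.IsPath u t q) :
    N.IsPath s t (p ++ q) := by
  induction p generalizing s with
  | nil => cases hp; exact hq
  | cons e es ih => exact ⟨hp.1, ih hp.2⟩

theorem isPath_flatMap_finRange {m : ℕ} (g : Fin (m + 1) → V) (seg : Fin m → List E)
    (h : ∀ i, N.IsPath (g i.castSucc) (g i.succ) (seg i)) :
    N.IsPath (g 0) (g (Fin.last m)) ((List.finRange m).flatMap seg) := by
  induction m with
  | zero => rfl
  | succ m ih =>
    rw [List.finRange_succ, List.flatMap_cons, List.flatMap_map]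
    refine (h 0).append N ?_
    simpa [Fin.succ_castSucc] using
      ih (fun i => g i.succ) (fun i => seg i.succ) fun i => by simpa using h i.succ

end Network

namespace PathFlow

open Finset

variable {V E ι : Type} [DecidableEq E] [Fintype ι] {N : Network V E} {s t : V}

/-- A path listed twice gets rate `2 r`. -/
noncomputable def ofPaths (P : ι → List E) (hP : ∀ j, N.IsPath s t (P j)) (r : ℝ)
    (hr : 0 ≤ r) : PathFlow N s t where
  f := ∑ j, Finsupp.single (P j) r
  nonneg := sum_nonneg fun _ _ => Finsupp.single_nonneg.mpr hr
  isPath p hp := by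
    obtain ⟨j, -, hj⟩ := mem_biUnion.mp (Finsupp.support_finsetSum hp)
    rw [mem_singleton.mp (Finsupp.support_single_subset hj)]
    exact hP j

variable (P : ι → List E) (hP : ∀ j, N.IsPath s t (P j)) (r : ℝ) (hr : 0 ≤ r)

theorem ofPaths_apply (p : List E) :
    (ofPaths P hP r hr).f p = #{j | P j = p} * r := by
  simp only [ofPaths, Finsupp.finsetSum_apply, Finsupp.single_apply, sum_ite, sum_const_zero,
    add_zero, sum_const, nsmul_eq_mul]

theorem ofPaths_apply_of_injective (hinj : Function.Injective P) (j : ι) :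
    (ofPaths P hP r hr).f (P j) = r := by
  have hcard : #{i | P i = P j} = 1 := card_eq_one.mpr ⟨j, by ext; simp [hinj.eq_iff]⟩
  rw [ofPaths_apply, hcard, Nat.cast_one, one_mul]

theorem ofPaths_apply_of_notMem_range {p : List E} (hp : p ∉ Set.range P) :
    (ofPaths P hP r hr).f p = 0 := by
  rw [ofPaths_apply, filter_false_of_mem fun j _ hj => hp ⟨j, hj⟩, card_empty, Nat.cast_zero,
    zero_mul]

theorem mem_range_of_mem_support_ofPaths {p : List E} (hp : p ∈ (ofPaths P hP r hr).f.support) :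
    p ∈ Set.range P := by
  by_contra h
  exact Finsupp.mem_support_iff.mp hp (ofPaths_apply_of_notMem_range P hP r hr h)

/-- Both rates are additive in the flow, so they can be computed path by path. -/
theorem totalRate_ofPaths : (ofPaths P hP r hr).totalRate = Fintype.card ι * r := by
  change (∑ j, Finsupp.single (P j) r).sum (fun _ x => x) = _
  rw [← Finsupp.sum_finsetSum_index (fun _ => rfl) fun _ _ _ => rfl]
  simp [Finsupp.sum_single_index]

theorem edgeRate_ofPaths (e : E) : (ofPaths P hP r hr).edgeRate e = #{j | e ∈ P j} * r := by
  change (∑ j, Finsupp.single (P j) r).sum (fun p x => if e ∈ p then x else 0) = _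
  rw [← Finsupp.sum_finsetSum_index (fun _ => by simp) fun _ _ _ => by split_ifs <;> simp]
  simp [Finsupp.sum_single_index, sum_ite, sum_const, nsmul_eq_mul]

theorem edgeRate_ofPaths_le {e : E} (he : ∃ j, e ∉ P j) :
    (ofPaths P hP r hr).edgeRate e ≤ (Fintype.card ι - 1) * r := by
  obtain ⟨j, hj⟩ := he
  have hlt : #{j | e ∈ P j} < Fintype.card ι :=
    card_lt_card (filter_ssubset.mpr ⟨j, mem_univ j, hj⟩)
  have hle : (#{j | e ∈ P j} : ℝ) ≤ Fintype.card ι - 1 := by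
    rw [le_sub_iff_add_le]
    exact_mod_cast hlt
  rw [edgeRate_ofPaths]
  exact mul_le_mul_of_nonneg_right hle hr

end PathFlow

section Bblock

variable {m : ℕ}

theorem isPath_blockPath (a : Fin m → ℕ) (j : Fin m) :
    (Gpart m a).IsPath (Sum.inl 0) (Sum.inl (Fin.last m)) (blockPath m j) :=
  Network.isPath_flatMap_finRange _ Sum.inl _ fun i => by
    by_cases h : i = j <;> simp [h, Network.IsPath, Gpart]

theorem pathDelay_blockPath (a : Fin m → ℕ) (j : Fin m) :
    (Gpart m a).pathDelay (blockPath m j) = a j := by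
  simp [Network.pathDelay, blockPath, List.flatMap_def, List.sum_flatten,
    apply_ite, Gpart, ← Fin.sum_univ_def]

theorem inl_mem_blockPath {i j : Fin m} : Sum.inl i ∈ blockPath m j ↔ i = j := by
  simp [blockPath, mem_ite]

theorem inr_inl_notMem_blockPath (i : Fin m) : Sum.inr (Sum.inl i) ∉ blockPath m i := by
  simp [blockPath, mem_ite, eq_comm]

theorem inr_inr_notMem_blockPath (i : Fin m) : Sum.inr (Sum.inr i) ∉ blockPath m i := by
  simp [blockPath, mem_ite, eq_comm]

theorem blockPath_injective : Function.Injective (blockPath m) := fun _ _ h =>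
  inl_mem_blockPath.mp (h ▸ inl_mem_blockPath.mpr rfl)

theorem exists_notMem_blockPath (hm : 2 ≤ m) (e : GE m) : ∃ j, e ∉ blockPath m j := by
  rcases e with i | i | i
  · have := Fin.nontrivial_iff_two_le.mpr hm
    obtain ⟨j, hj⟩ := exists_ne i
    exact ⟨j, inl_mem_blockPath.not.mpr hj.symm⟩
  · exact ⟨i, inr_inl_notMem_blockPath i⟩
  · exact ⟨i, inr_inr_notMem_blockPath i⟩

end Bblock

/-- **Lemma 3, achievability.** For `n ≥ 3`, assigning rate `1/(n-2)` to each of the `n - 1`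
paths `p_1,…,p_{n-1}` (where `p_j` uses the unique delay-1 edge of layer `j` and detours
elsewhere) yields a feasible flow of rate `R = (n-1)/(n-2)` in `B_n` in which every
flow-carrying path has delay exactly `1`. -/
theorem bblock_fractional_flow (n : ℕ) (hn : 3 ≤ n) :
    ∃ F : PathFlow (Bblock n) (BblockSrc n) (BblockSink n),
      (∀ j : Fin (n - 1), F.f (blockPath (n - 1) j) = 1 / ((n : ℝ) - 2)) ∧
      (∀ p, (∀ j : Fin (n - 1), p ≠ blockPath (n - 1) j) → F.f p = 0) ∧
      F.Feasible (((n : ℝ) - 1) / ((n : ℝ) - 2)) ∧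
      (∀ p ∈ F.f.support, (Bblock n).pathDelay p = 1) := by
  have hn2 : (0 : ℝ) < n - 2 := by
    have : (3 : ℝ) ≤ n := by exact_mod_cast hn
    linarith
  have hcast : ((n - 1 : ℕ) : ℝ) = n - 1 := by
    rw [Nat.cast_sub (by omega), Nat.cast_one]
  let F := PathFlow.ofPaths (N := Bblock n) (blockPath (n - 1)) (isPath_blockPath _) _
    (one_div_nonneg.mpr hn2.le)
  refine ⟨F, PathFlow.ofPaths_apply_of_injective _ _ _ _ blockPath_injective,
    fun p hp => PathFlow.ofPaths_apply_of_notMem_range _ _ _ _ ?_, ⟨?_, fun e => ?_⟩,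
    fun p hp => ?_⟩
  · rintro ⟨j, rfl⟩
    exact hp j rfl
  · rw [PathFlow.totalRate_ofPaths, Fintype.card_fin, hcast, mul_one_div]
  · calc F.edgeRate e ≤ (Fintype.card (Fin (n - 1)) - 1) * (1 / ((n : ℝ) - 2)) :=
          PathFlow.edgeRate_ofPaths_le _ _ _ _ (exists_notMem_blockPath (by omega) e)
      _ = 1 := by rw [Fintype.card_fin, hcast]; field_simp; ring
      _ = (Bblock n).cap e := by simp [Gpart]
  · obtain ⟨j, rfl⟩ := PathFlow.mem_range_of_mem_support_ofPaths _ _ _ _ hp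
    exact pathDelay_blockPath _ j
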